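/- arXiv:2509.24736 — 3 statements merged into one kernel-verified Lean document; each statement's English description precedes it below -/
import Mathlib

section
/- The stopping criterion of the Bundle method certifies approximate optimality: let w be a σ-subgradient of φ at π̄, let η* > 0 and ε ≥ 0, and set M = max(0, φ(π̄)). If η*·‖w‖² + σ ≤ ε·M, then for every y ∈ ℝ^m, φ(π̄) ≤ φ(y) + ε·M + √(ε·M/η*)·‖y − π̄‖. -/
open RealInnerProductSpace

theorem le_add_add_norm_mul_of_forall_inner_sub_le {E : Type*} [NormedAddCommGroup E]
    [InnerProductSpace ℝ E] {f : E → ℝ} {x w : E} {σ : ℝ}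
    (hw : ∀ y, f x + ⟪w, y - x⟫ - σ ≤ f y) (y : E) :
    f x ≤ f y + σ + ‖w‖ * ‖y - x‖ := by
  have hinner : -(‖w‖ * ‖y - x‖) ≤ ⟪w, y - x⟫ :=
    neg_le_of_abs_le (abs_real_inner_le_norm w (y - x))
  linarith [hw y]

theorem stmt_5_general {m : ℕ} (φ : EuclideanSpace ℝ (Fin m) → ℝ)
    (πbar w : EuclideanSpace ℝ (Fin m)) (σ : ℝ) (hσ : 0 ≤ σ)
    (hw : ∀ y, φ y ≥ φ πbar + ⟪w, y - πbar⟫ - σ)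
    (ηstar ε : ℝ) (hη : 0 < ηstar)
    (hstop : ηstar * ‖w‖ ^ 2 + σ ≤ ε * max 0 (φ πbar)) :
    ∀ y, φ πbar ≤ φ y + ε * max 0 (φ πbar) +
      Real.sqrt (ε * max 0 (φ πbar) / ηstar) * ‖y - πbar‖ := by
  intro y
  set M := ε * max 0 (φ πbar)
  have hσM : σ ≤ M := by nlinarith [sq_nonneg ‖w‖]
  have hw_le : ‖w‖ ≤ √(M / ηstar) := by
    refine Real.le_sqrt_of_sq_le ?_
    rw [le_div_iff₀ hη]
    linarith
  have hgap := mul_le_mul_of_nonneg_right hw_le (norm_nonneg (y - πbar))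
  linarith [le_add_add_norm_mul_of_forall_inner_sub_le hw y]

/-- The stopping criterion of the Bundle method certifies approximate optimality:
if `w` is a `σ`-subgradient of `φ` at `π̄`, `η* > 0`, `ε ≥ 0`, `M = max(0, φ(π̄))`
and `η*‖w‖² + σ ≤ εM`, then `φ(π̄) ≤ φ(y) + εM + √(εM/η*)·‖y − π̄‖` for all `y`. -/
theorem stmt_5 {m : ℕ} (φ : EuclideanSpace ℝ (Fin m) → ℝ)
    (hφ : ConvexOn ℝ Set.univ φ)
    (πbar w : EuclideanSpace ℝ (Fin m)) (σ : ℝ) (hσ : 0 ≤ σ)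
    (hw : ∀ y, φ y ≥ φ πbar + ⟪w, y - πbar⟫ - σ)
    (ηstar ε : ℝ) (hη : 0 < ηstar) (hε : 0 ≤ ε)
    (hstop : ηstar * ‖w‖ ^ 2 + σ ≤ ε * max 0 (φ πbar)) :
    ∀ y, φ πbar ≤ φ y + ε * max 0 (φ πbar) +
      Real.sqrt (ε * max 0 (φ πbar) / ηstar) * ‖y - πbar‖ :=
  stmt_5_general φ πbar w σ hσ hw ηstar ε hη hstop
end

section
/- Strong duality holds between the primal and dual master problems: the minimum of F over ℝ^m and the minimum of G over Δ_n are both attained, and min_{d ∈ ℝ^m} F(d) = − min_{θ ∈ Δ_n} G(θ). -/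
/-!
Weak duality is Fenchel–Young: averaging the affine pieces of `F` with weights `θ` bounds
`F(d)` below by `⟪s, d⟫ - ⟪θ, α⟫ + ‖d‖²/(2η)`, with `s = ∑ θ i • g i`, and minimising over `d`
gives `-G(θ)`. For the converse, `G` attains its minimum on the compact simplex at some `θ`;
moving `θ` towards a vertex `e_i` cannot decrease `G`, which is the first-order condition
`η ‖s‖² + ⟪θ, α⟫ ≤ η ⟪s, g i⟫ + α i`. It says exactly that every affine piece of `F` at
`d = -η s` is at most its `θ`-average, so `F(-η s) = -G(θ)`.
-/

open RealInnerProductSpace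

/-- The primal master problem objective `F(d) = max_i (⟨g_i, d⟩ − α_i) + ‖d‖²/(2η)`. -/
noncomputable def primalF {m n : ℕ} (hn : 0 < n)
    (g : Fin n → EuclideanSpace ℝ (Fin m)) (α : Fin n → ℝ) (η : ℝ)
    (d : EuclideanSpace ℝ (Fin m)) : ℝ :=
  Finset.univ.sup' (Finset.univ_nonempty_iff.mpr (Fin.pos_iff_nonempty.mp hn))
    (fun i => ⟪g i, d⟫ - α i) + ‖d‖ ^ 2 / (2 * η)

/-- The dual master problem objective `G(θ) = (η/2)‖Σ θ_i g_i‖² + Σ θ_i α_i`. -/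
noncomputable def dualG {m n : ℕ}
    (g : Fin n → EuclideanSpace ℝ (Fin m)) (α : Fin n → ℝ) (η : ℝ)
    (θ : Fin n → ℝ) : ℝ :=
  (η / 2) * ‖∑ i, θ i • g i‖ ^ 2 + ∑ i, θ i * α i

open Finset Filter Topology

lemma Finset.sum_mul_le_sup' {ι : Type*} [Fintype ι] (hne : (univ : Finset ι).Nonempty)
    (f θ : ι → ℝ) (hθ : θ ∈ stdSimplex ℝ ι) :
    ∑ i, θ i * f i ≤ univ.sup' hne f := by
  have h := centerMass_le_sup (s := univ) (f := f) (fun i _ => hθ.1 i) (by rw [hθ.2]; exact one_pos)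
  rwa [centerMass_eq_of_sum_1 _ _ hθ.2] at h

lemma inner_add_norm_sq_div_add_mul_norm_sq_nonneg {E : Type*} [NormedAddCommGroup E]
    [InnerProductSpace ℝ E] {η : ℝ} (hη : 0 < η) (s d : E) :
    0 ≤ ⟪s, d⟫ + ‖d‖ ^ 2 / (2 * η) + η / 2 * ‖s‖ ^ 2 := by
  have hsq : ‖d + η • s‖ ^ 2 = ‖d‖ ^ 2 + 2 * η * ⟪s, d⟫ + η ^ 2 * ‖s‖ ^ 2 := by
    rw [norm_add_sq_real, real_inner_smul_right, norm_smul, Real.norm_eq_abs, mul_pow, sq_abs,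
      real_inner_comm]
    ring
  have hrepr : ⟪s, d⟫ + ‖d‖ ^ 2 / (2 * η) + η / 2 * ‖s‖ ^ 2 = ‖d + η • s‖ ^ 2 / (2 * η) := by
    rw [hsq]
    field_simp
    ring
  rw [hrepr]
  positivity

lemma nonneg_of_forall_mul_add_sq_mul_nonneg {A C : ℝ}
    (h : ∀ t : ℝ, 0 < t → t ≤ 1 → 0 ≤ t * A + t ^ 2 * C) : 0 ≤ A := by
  have hlim : Tendsto (fun t : ℝ => A + t * C) (𝓝[>] 0) (𝓝 A) := by
    have : Tendsto (fun t : ℝ => A + t * C) (𝓝 0) (𝓝 (A + 0 * C)) :=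
      tendsto_const_nhds.add (tendsto_id.mul_const C)
    simpa using this.mono_left nhdsWithin_le_nhds
  refine ge_of_tendsto hlim ?_
  filter_upwards [Ioc_mem_nhdsGT (zero_lt_one' ℝ)] with t ⟨ht0, ht1⟩
  have := h t ht0 ht1
  have hfactor : t * A + t ^ 2 * C = t * (A + t * C) := by ring
  rw [hfactor] at this
  exact nonneg_of_mul_nonneg_right this ht0

section MasterProblem

variable {m n : ℕ} (g : Fin n → EuclideanSpace ℝ (Fin m)) (α : Fin n → ℝ) (η : ℝ)

lemma neg_dualG_le_primalF (hn : 0 < n) (hη : 0 < η) (d : EuclideanSpace ℝ (Fin m))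
    {θ : Fin n → ℝ} (hθ : θ ∈ stdSimplex ℝ (Fin n)) :
    -dualG g α η θ ≤ primalF hn g α η d := by
  set s := ∑ i, θ i • g i
  have havg : ⟪s, d⟫ - ∑ i, θ i * α i ≤
      univ.sup' (univ_nonempty_iff.mpr (Fin.pos_iff_nonempty.mp hn)) (fun i => ⟪g i, d⟫ - α i) := by
    have hexp : ∑ i, θ i * (⟪g i, d⟫ - α i) = ⟪s, d⟫ - ∑ i, θ i * α i := by
      simp only [s, sum_inner, real_inner_smul_left, mul_sub, sum_sub_distrib]
    exact hexp ▸ sum_mul_le_sup' _ _ θ hθ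
  have := inner_add_norm_sq_div_add_mul_norm_sq_nonneg hη s d
  unfold dualG primalF
  linarith

lemma dualG_add_smul (θ v : Fin n → ℝ) (t : ℝ) :
    dualG g α η (θ + t • v) = dualG g α η θ
      + t * (η * ⟪∑ i, θ i • g i, ∑ i, v i • g i⟫ + ∑ i, v i * α i)
      + t ^ 2 * (η / 2 * ‖∑ i, v i • g i‖ ^ 2) := by
  have hs : ∑ i, (θ + t • v) i • g i = ∑ i, θ i • g i + t • ∑ i, v i • g i := by
    simp only [Pi.add_apply, Pi.smul_apply, smul_eq_mul, add_smul, mul_smul, sum_add_distrib,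
      smul_sum]
  have hα : ∑ i, (θ + t • v) i * α i = ∑ i, θ i * α i + t * ∑ i, v i * α i := by
    simp only [Pi.add_apply, Pi.smul_apply, smul_eq_mul, add_mul, mul_assoc, sum_add_distrib,
      mul_sum]
  unfold dualG
  rw [hs, hα, norm_add_sq_real, real_inner_smul_right, norm_smul, Real.norm_eq_abs, mul_pow,
    sq_abs]
  ring

lemma exists_isMinOn_dualG (hn : 0 < n) :
    ∃ θ ∈ stdSimplex ℝ (Fin n), IsMinOn (dualG g α η) (stdSimplex ℝ (Fin n)) θ := by
  have hcont : Continuous (dualG g α η) := by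
    unfold dualG
    fun_prop
  exact (isCompact_stdSimplex ℝ (Fin n)).exists_isMinOn ⟨_, single_mem_stdSimplex ℝ ⟨0, hn⟩⟩
    hcont.continuousOn

lemma IsMinOn.dualG_le_inner_add {θ : Fin n → ℝ} (hθ : θ ∈ stdSimplex ℝ (Fin n))
    (hmin : IsMinOn (dualG g α η) (stdSimplex ℝ (Fin n)) θ) (i : Fin n) :
    η * ‖∑ j, θ j • g j‖ ^ 2 + ∑ j, θ j * α j ≤ η * ⟪∑ j, θ j • g j, g i⟫ + α i := by
  set s := ∑ j, θ j • g j
  set v : Fin n → ℝ := Pi.single i 1 - θ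
  have hv : ∑ j, v j • g j = g i - s := by
    simp [v, sub_smul, sum_sub_distrib, Pi.single_apply, s]
  have hvα : ∑ j, v j * α j = α i - ∑ j, θ j * α j := by
    simp [v, sub_mul, sum_sub_distrib, Pi.single_apply]
  suffices 0 ≤ η * ⟪s, g i - s⟫ + ∑ j, v j * α j by
    rw [hvα, inner_sub_right, real_inner_self_eq_norm_sq] at this
    linarith
  refine nonneg_of_forall_mul_add_sq_mul_nonneg (C := η / 2 * ‖g i - s‖ ^ 2) fun t ht0 ht1 => ?_
  have hmem : θ + t • v ∈ stdSimplex ℝ (Fin n) := by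
    have := convex_stdSimplex ℝ (Fin n) hθ (single_mem_stdSimplex ℝ i)
      (sub_nonneg.mpr ht1) ht0.le (sub_add_cancel 1 t)
    convert this using 1
    simp only [v, smul_sub, sub_smul, one_smul]
    abel
  have : dualG g α η θ ≤ dualG g α η (θ + t • v) := hmin hmem
  rw [dualG_add_smul, hv] at this
  linarith

lemma primalF_neg_smul_le_neg_dualG (hn : 0 < n) (hη : 0 < η) {θ : Fin n → ℝ}
    (hθ : θ ∈ stdSimplex ℝ (Fin n)) (hmin : IsMinOn (dualG g α η) (stdSimplex ℝ (Fin n)) θ) :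
    primalF hn g α η ((-η) • ∑ i, θ i • g i) ≤ -dualG g α η θ := by
  set s := ∑ i, θ i • g i
  have hmax : univ.sup' (univ_nonempty_iff.mpr (Fin.pos_iff_nonempty.mp hn))
      (fun i => ⟪g i, (-η) • s⟫ - α i) ≤ -η * ‖s‖ ^ 2 - ∑ i, θ i * α i := by
    refine sup'_le _ _ fun i _ => ?_
    have := hmin.dualG_le_inner_add g α η hθ i
    rw [real_inner_smul_right, real_inner_comm]
    linarith
  have hnorm : ‖(-η) • s‖ ^ 2 / (2 * η) = η / 2 * ‖s‖ ^ 2 := by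
    rw [norm_smul, Real.norm_eq_abs, mul_pow, sq_abs]
    field_simp
  unfold primalF dualG
  rw [hnorm]
  linarith

end MasterProblem

theorem stmt_7_general {m n : ℕ} (hn : 0 < n)
    (g : Fin n → EuclideanSpace ℝ (Fin m)) (α : Fin n → ℝ)
    (η : ℝ) (hη : 0 < η) :
    ∃ d : EuclideanSpace ℝ (Fin m), ∃ θ : Fin n → ℝ,
      (∀ i, 0 ≤ θ i) ∧ (∑ i, θ i = 1) ∧
      (∀ d', primalF hn g α η d ≤ primalF hn g α η d') ∧
      (∀ θ' : Fin n → ℝ, (∀ i, 0 ≤ θ' i) → (∑ i, θ' i = 1) →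
        dualG g α η θ ≤ dualG g α η θ') ∧
      primalF hn g α η d = - dualG g α η θ := by
  obtain ⟨θ, hθ, hmin⟩ := exists_isMinOn_dualG g α η hn
  have hstrong : primalF hn g α η ((-η) • ∑ i, θ i • g i) = -dualG g α η θ :=
    le_antisymm (primalF_neg_smul_le_neg_dualG g α η hn hη hθ hmin)
      (neg_dualG_le_primalF g α η hn hη _ hθ)
  refine ⟨(-η) • ∑ i, θ i • g i, θ, hθ.1, hθ.2, fun d' => ?_, fun θ' h0 h1 => hmin ⟨h0, h1⟩,
    hstrong⟩
  rw [hstrong]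
  exact neg_dualG_le_primalF g α η hn hη d' hθ

/-- Strong duality holds between the primal and dual master problems: both minima are
attained and `min F = − min G`. -/
theorem stmt_7 {m n : ℕ} (hn : 0 < n)
    (g : Fin n → EuclideanSpace ℝ (Fin m)) (α : Fin n → ℝ) (hα : ∀ i, 0 ≤ α i)
    (η : ℝ) (hη : 0 < η) :
    ∃ d : EuclideanSpace ℝ (Fin m), ∃ θ : Fin n → ℝ,
      (∀ i, 0 ≤ θ i) ∧ (∑ i, θ i = 1) ∧
      (∀ d', primalF hn g α η d ≤ primalF hn g α η d') ∧
      (∀ θ' : Fin n → ℝ, (∀ i, 0 ≤ θ' i) → (∑ i, θ' i = 1) →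
        dualG g α η θ ≤ dualG g α η θ') ∧
      primalF hn g α η d = - dualG g α η θ :=
  stmt_7_general hn g α η hη
end

section
/- The continuous knapsack problem admits an optimal solution with at most one fractional coordinate: let K be a finite set, c ≥ 0, q : K → ℝ with q_k ≥ 0 for all k, and w : K → ℝ. Then there exists x* minimizing Σ_{k ∈ K} w_k x_k over the set { x : K → ℝ : 0 ≤ x_k ≤ q_k for all k, Σ_{k ∈ K} x_k ≤ c } such that the set { k ∈ K : 0 < x*_k and x*_k < q_k } has at most one element. -/
/-!
The feasible region is compact, so an optimal solution exists; take one with the fewest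
fractional coordinates. If two coordinates `a ≠ b` were fractional, say with `w a ≤ w b`,
shifting mass from `b` to `a` until one of them hits a bound keeps the total, does not
increase the cost, and strictly shrinks the set of fractional coordinates.
-/

def fractionalCoords {K : Type*} (q x : K → ℝ) : Set K :=
  {k | 0 < x k ∧ x k < q k}

section

variable {K : Type*} [Fintype K]

def knapsackRegion (q : K → ℝ) (c : ℝ) : Set (K → ℝ) :=
  Set.univ.pi (fun k => Set.Icc 0 (q k)) ∩ {x | ∑ k, x k ≤ c}

lemma isCompact_knapsackRegion (q : K → ℝ) (c : ℝ) : IsCompact (knapsackRegion q c) :=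
  (isCompact_univ_pi fun _ => isCompact_Icc).inter_right
    (isClosed_le (by fun_prop) continuous_const)

lemma zero_mem_knapsackRegion {q : K → ℝ} {c : ℝ} (hc : 0 ≤ c) (hq : ∀ k, 0 ≤ q k) :
    0 ∈ knapsackRegion q c :=
  ⟨fun k _ => ⟨le_rfl, hq k⟩, by simpa using hc⟩

lemma sum_mul_single_sub_single {R : Type*} [CommRing R] [DecidableEq K] (f : K → R) (a b : K) :
    ∑ k, f k * (Pi.single a 1 - Pi.single b 1 : K → R) k = f a - f b := by
  simp [mul_sub, Finset.sum_sub_distrib, Pi.single_apply]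

lemma sum_mul_add_smul_single_sub_single {R : Type*} [CommRing R] [DecidableEq K]
    (f x : K → R) (t : R) (a b : K) :
    ∑ k, f k * (x + t • (Pi.single a 1 - Pi.single b 1 : K → R)) k =
      ∑ k, f k * x k + t * (f a - f b) := by
  rw [← sum_mul_single_sub_single f a b, Finset.mul_sum, ← Finset.sum_add_distrib]
  refine Finset.sum_congr rfl fun k _ => ?_
  simp only [Pi.add_apply, Pi.smul_apply, smul_eq_mul]
  ring

lemma exists_transfer_of_le {q w x : K → ℝ} {a b : K} (hab : a ≠ b)
    (hx : x ∈ Set.univ.pi fun k => Set.Icc 0 (q k))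
    (ha : a ∈ fractionalCoords q x) (hb : b ∈ fractionalCoords q x) (hw : w a ≤ w b) :
    ∃ y ∈ Set.univ.pi (fun k => Set.Icc 0 (q k)), ∑ k, y k = ∑ k, x k ∧
      ∑ k, w k * y k ≤ ∑ k, w k * x k ∧ fractionalCoords q y ⊂ fractionalCoords q x := by
  classical
  set t := min (q a - x a) (x b)
  have ht : 0 ≤ t := le_min (by linarith [ha.2]) hb.1.le
  set y := x + t • (Pi.single a 1 - Pi.single b 1 : K → ℝ)
  have hya : y a = x a + t := by simp [y, hab]
  have hyb : y b = x b - t := by simp [y, hab.symm, sub_eq_add_neg]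
  have hy : ∀ k, k ≠ a → k ≠ b → y k = x k := fun k hka hkb => by simp [y, hka, hkb]
  have hsub : fractionalCoords q y ⊆ fractionalCoords q x := by
    intro k hk
    by_cases hka : k = a
    · exact hka ▸ ha
    by_cases hkb : k = b
    · exact hkb ▸ hb
    simpa [fractionalCoords, hy k hka hkb] using hk
  refine ⟨y, fun k _ => ?_, ?_, ?_, (Set.ssubset_iff_of_subset hsub).2 ?_⟩
  · by_cases hka : k = a
    · subst hka
      exact ⟨by linarith [ha.1], by rw [hya]; linarith [min_le_left (q k - x k) (x b)]⟩
    by_cases hkb : k = b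
    · subst hkb
      exact ⟨by rw [hyb]; linarith [min_le_right (q a - x a) (x k)], by linarith [hb.2]⟩
    · rw [hy k hka hkb]; exact hx k trivial
  · simpa only [one_mul, sub_self, mul_zero, add_zero] using
      sum_mul_add_smul_single_sub_single (fun _ => 1) x t a b
  · rw [sum_mul_add_smul_single_sub_single]
    linarith [mul_nonpos_of_nonneg_of_nonpos ht (sub_nonpos.2 hw)]
  · rcases min_choice (q a - x a) (x b) with h | h
    · exact ⟨a, ha, fun h' => h'.2.ne (by rw [hya, show t = _ from h]; ring)⟩
    · exact ⟨b, hb, fun h' => h'.1.ne' (by rw [hyb, show t = _ from h]; ring)⟩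

lemma exists_transfer {q w x : K → ℝ} {a b : K} (hab : a ≠ b)
    (hx : x ∈ Set.univ.pi fun k => Set.Icc 0 (q k))
    (ha : a ∈ fractionalCoords q x) (hb : b ∈ fractionalCoords q x) :
    ∃ y ∈ Set.univ.pi (fun k => Set.Icc 0 (q k)), ∑ k, y k = ∑ k, x k ∧
      ∑ k, w k * y k ≤ ∑ k, w k * x k ∧ fractionalCoords q y ⊂ fractionalCoords q x := by
  rcases le_total (w a) (w b) with hw | hw
  · exact exists_transfer_of_le hab hx ha hb hw
  · exact exists_transfer_of_le hab.symm hx hb ha hw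

lemma exists_isMinOn_knapsackRegion_fractionalCoords_subsingleton {q : K → ℝ} {c : ℝ}
    (w : K → ℝ) (hne : (knapsackRegion q c).Nonempty) :
    ∃ x ∈ knapsackRegion q c, IsMinOn (fun x => ∑ k, w k * x k) (knapsackRegion q c) x ∧
      (fractionalCoords q x).Subsingleton := by
  set F := knapsackRegion q c
  set cost : (K → ℝ) → ℝ := fun x => ∑ k, w k * x k
  obtain ⟨x₀, hx₀F, hx₀⟩ :=
    (isCompact_knapsackRegion q c).exists_isMinOn hne (by fun_prop : Continuous cost).continuousOn
  obtain ⟨x, ⟨hxF, hxmin⟩, hfewest⟩ := (measure fun x => (fractionalCoords q x).ncard).wf.has_min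
    {x | x ∈ F ∧ IsMinOn cost F x} ⟨x₀, hx₀F, hx₀⟩
  refine ⟨x, hxF, hxmin, fun a ha b hb => by_contra fun hab => ?_⟩
  obtain ⟨y, hybox, hysum, hycost, hyfrac⟩ := exists_transfer (w := w) hab hxF.1 ha hb
  have hyF : y ∈ F := ⟨hybox, show ∑ k, y k ≤ c from hysum ▸ hxF.2⟩
  have hymin : IsMinOn cost F y := fun z hz => hycost.trans (hxmin hz)
  exact hfewest y ⟨hyF, hymin⟩ (Set.ncard_lt_ncard hyfrac)

end

/-- The continuous knapsack problem admits an optimal solution with at most one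
fractional coordinate. -/
theorem stmt_16 {K : Type*} [Fintype K] (c : ℝ) (hc : 0 ≤ c) (q : K → ℝ)
    (hq : ∀ k, 0 ≤ q k) (w : K → ℝ) :
    ∃ x : K → ℝ, (∀ k, 0 ≤ x k ∧ x k ≤ q k) ∧ (∑ k, x k) ≤ c ∧
      (∀ x' : K → ℝ, (∀ k, 0 ≤ x' k ∧ x' k ≤ q k) → (∑ k, x' k) ≤ c →
        ∑ k, w k * x k ≤ ∑ k, w k * x' k) ∧
      {k : K | 0 < x k ∧ x k < q k}.Subsingleton := by
  obtain ⟨x, ⟨hxbox, hxsum⟩, hxmin, hxfrac⟩ :=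
    exists_isMinOn_knapsackRegion_fractionalCoords_subsingleton w
      ⟨0, zero_mem_knapsackRegion hc hq⟩
  exact ⟨x, fun k => hxbox k trivial, hxsum,
    fun x' hx' hx'sum => hxmin ⟨fun k _ => hx' k, hx'sum⟩, hxfrac⟩
end
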